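/- arXiv:2307.03540 — 2 statements merged into one kernel-verified Lean document; each statement's English description precedes it below -/
import Mathlib

section
/- In a dual weak brace S, a full inverse subsemigroup I of (S,+) is a left ideal of S if and only if a · x ∈ I for all a ∈ S and x ∈ I, where a · x := -a + a ∘ x - x. -/
/-- A weak brace: `(S,+)` and `(S,∘)` are inverse semigroups satisfying
`a ∘ (b + c) = a ∘ b - a + a ∘ c` and `a ∘ a⁻ = -a + a`. -/
class WeakBrace (S : Type*) where
  add : S → S → S
  mul : S → S → S
  neg : S → S
  inv : S → S
  add_assoc : ∀ a b c : S, add (add a b) c = add a (add b c)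
  mul_assoc : ∀ a b c : S, mul (mul a b) c = mul a (mul b c)
  add_reg : ∀ a : S, add (add a (neg a)) a = a
  neg_reg : ∀ a : S, add (add (neg a) a) (neg a) = neg a
  neg_unique : ∀ a x : S, add (add a x) a = a → add (add x a) x = x → x = neg a
  mul_reg : ∀ a : S, mul (mul a (inv a)) a = a
  inv_reg : ∀ a : S, mul (mul (inv a) a) (inv a) = inv a
  inv_unique : ∀ a x : S, mul (mul a x) a = a → mul (mul x a) x = x → x = inv a
  distrib : ∀ a b c : S, mul a (add b c) = add (add (mul a b) (neg a)) (mul a c)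
  link : ∀ a : S, mul a (inv a) = add (neg a) a

/-- A dual weak brace: a weak brace whose multiplicative semigroup is Clifford. -/
class DualWeakBrace (S : Type*) extends WeakBrace S where
  clifford : ∀ a : S, WeakBrace.mul a (WeakBrace.inv a) = WeakBrace.mul (WeakBrace.inv a) a

namespace WeakBrace

variable {S : Type*} [WeakBrace S]

/-- `λ_a(b) = -a + a ∘ b`. -/
def lam (a b : S) : S := add (neg a) (mul a b)

/-- `ρ_b(a) = (-a + a ∘ b)⁻ ∘ a ∘ b`. -/
def rho (b a : S) : S := mul (mul (inv (lam a b)) a) b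

/-- `a · b = -a + a ∘ b - b`. -/
def cdot (a b : S) : S := add (add (neg a) (mul a b)) (neg b)

/-- `a⁰ = a - a`. -/
def sq (a : S) : S := add a (neg a)

/-- Additive idempotent (the sets of idempotents of `+` and `∘` coincide). -/
def IsIdem (e : S) : Prop := add e e = e

/-- `[a,b]₊ = -a - b + a + b`. -/
def brkt (a b : S) : S := add (add (add (neg a) (neg b)) a) b

/-- `I` is a full inverse subsemigroup of `(S,+)`. -/
def IsFullAddSub (I : Set S) : Prop :=
  (∀ e : S, IsIdem e → e ∈ I) ∧ (∀ x ∈ I, ∀ y ∈ I, add x y ∈ I) ∧ (∀ x ∈ I, neg x ∈ I)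

/-- `I` is a normal subsemigroup of `(S,+)`. -/
def IsNormalAdd (I : Set S) : Prop :=
  IsFullAddSub I ∧ ∀ a : S, ∀ x ∈ I, add (add (neg a) x) a ∈ I

/-- `I` is a normal subsemigroup of `(S,∘)`. -/
def IsNormalMul (I : Set S) : Prop :=
  (∀ e : S, IsIdem e → e ∈ I) ∧ (∀ x ∈ I, ∀ y ∈ I, mul x y ∈ I) ∧ (∀ x ∈ I, inv x ∈ I) ∧
    ∀ a : S, ∀ x ∈ I, mul (mul (inv a) x) a ∈ I

/-- `I` is a left ideal of the weak brace `S`. -/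
def IsLeftIdeal (I : Set S) : Prop :=
  IsFullAddSub I ∧ ∀ a : S, ∀ x ∈ I, lam a x ∈ I

/-- `I` is an ideal of the weak brace `S`. -/
def IsIdeal (I : Set S) : Prop :=
  IsNormalAdd I ∧ (∀ a : S, ∀ x ∈ I, lam a x ∈ I) ∧ IsNormalMul I

/-- The socle `Soc(S)`. -/
def Soc (S : Type*) [WeakBrace S] : Set S :=
  {a | ∀ b : S, add a b = mul a b ∧ add a b = add b a}

/-- The annihilator `Ann(S)`. -/
def Ann (S : Type*) [WeakBrace S] : Set S :=
  {a | ∀ b : S, add a b = add b a ∧ add a b = mul a b ∧ mul a b = mul b a}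

/-- The congruence `a ∼_I b ⟺ a⁰ = b⁰ and -a + b ∈ I` associated to an ideal `I`. -/
def simI (I : Set S) (a b : S) : Prop := sq a = sq b ∧ add (neg a) b ∈ I

/-- Membership in the inverse subsemigroup of `(S,+)` generated by a set `X`. -/
inductive genAdd (X : Set S) : S → Prop
  | base : ∀ x ∈ X, genAdd X x
  | add : ∀ a b : S, genAdd X a → genAdd X b → genAdd X (add a b)
  | neg : ∀ a : S, genAdd X a → genAdd X (neg a)

/-- `X · Y`: the additive inverse subsemigroup generated by the elements `x · y`. -/
def cdotSet (X Y : Set S) : Set S :=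
  {s | genAdd {z | ∃ x ∈ X, ∃ y ∈ Y, z = cdot x y} s}

/-- `S^(n)` for `n ≥ 1`: `S^(1) = S`, `S^(n+1) = S^(n) · S`. -/
def Spow (S : Type*) [WeakBrace S] : ℕ → Set S
  | 0 => Set.univ
  | 1 => Set.univ
  | (n+2) => cdotSet (Spow S (n+1)) Set.univ

end WeakBrace

/-!
In a dual weak brace `a ∘ b + (-b + b) = a ∘ b`, so `λ_a(x) = a · x + x`; hence `λ_a(x) ∈ I`
and `a · x = λ_a(x) - x ∈ I` are equivalent for a full inverse subsemigroup `I`.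
For the absorption identity, the Clifford condition turns the additive idempotents
`g = -b + b` and `f = -(a ∘ b) + a ∘ b` into `b⁻ ∘ b` and `(a ∘ b)⁻ ∘ (a ∘ b)`, so `f ∘ g = f`,
and `g ∘ f = f` because idempotents of an inverse semigroup commute. Distributivity then gives
`f = f + g + f = f + g`, and `a ∘ b + g = a ∘ b + f + g = a ∘ b`.
-/

structure IsInverseSemigroup {M : Type*} (op : M → M → M) (inv : M → M) : Prop where
  assoc : ∀ a b c, op (op a b) c = op a (op b c)
  op_inv_op : ∀ a, op (op a (inv a)) a = a
  inv_op_inv : ∀ a, op (op (inv a) a) (inv a) = inv a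
  eq_inv : ∀ a x, op (op a x) a = a → op (op x a) x = x → x = inv a

namespace IsInverseSemigroup

variable {M : Type*} {op : M → M → M} {inv : M → M}

local infixl:70 " ⋆ " => op

theorem inv_inv (h : IsInverseSemigroup op inv) (a : M) : inv (inv a) = a :=
  (h.eq_inv (inv a) a (h.inv_op_inv a) (h.op_inv_op a)).symm

theorem inv_eq_self_of_idem (h : IsInverseSemigroup op inv) {e : M} (he : e ⋆ e = e) :
    inv e = e :=
  (h.eq_inv e e (by rw [he, he]) (by rw [he, he])).symm

theorem inv_op_self_idem (h : IsInverseSemigroup op inv) (a : M) :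
    inv a ⋆ a ⋆ (inv a ⋆ a) = inv a ⋆ a := by
  rw [← h.assoc, h.inv_op_inv]

theorem op_op_inv_op_self (h : IsInverseSemigroup op inv) (a b : M) :
    a ⋆ b ⋆ (inv b ⋆ b) = a ⋆ b := by
  rw [h.assoc, ← h.assoc b, h.op_inv_op]

/-- `f ⋆ inv (e ⋆ f) ⋆ e` is an inverse of `e ⋆ f`, hence equal to it, and it is idempotent. -/
theorem op_idem_of_idem (h : IsInverseSemigroup op inv) {e f : M} (he : e ⋆ e = e)
    (hf : f ⋆ f = f) : e ⋆ f ⋆ (e ⋆ f) = e ⋆ f := by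
  set u := inv (e ⋆ f)
  have hu : u ⋆ (e ⋆ f) ⋆ u = u := h.inv_op_inv (e ⋆ f)
  have hef : e ⋆ f ⋆ u ⋆ (e ⋆ f) = e ⋆ f := h.op_inv_op (e ⋆ f)
  have hfue : f ⋆ u ⋆ e = u := by
    refine h.eq_inv (e ⋆ f) _ ?_ ?_
    · calc e ⋆ f ⋆ (f ⋆ u ⋆ e) ⋆ (e ⋆ f) = e ⋆ (f ⋆ f) ⋆ u ⋆ ((e ⋆ e) ⋆ f) := by
            simp only [h.assoc]
        _ = e ⋆ f := by rw [he, hf, hef]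
    · calc f ⋆ u ⋆ e ⋆ (e ⋆ f) ⋆ (f ⋆ u ⋆ e) = f ⋆ (u ⋆ ((e ⋆ e) ⋆ (f ⋆ f)) ⋆ u) ⋆ e := by
            simp only [h.assoc]
        _ = f ⋆ u ⋆ e := by rw [he, hf, hu]
  have huu : u ⋆ u = u := by
    calc u ⋆ u = f ⋆ (u ⋆ (e ⋆ f) ⋆ u) ⋆ e := by
          conv_lhs => rw [← hfue]
          simp only [h.assoc]
      _ = u := by rw [hu, hfue]
  rw [← h.inv_inv (e ⋆ f), h.inv_eq_self_of_idem huu, huu]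

theorem op_comm_of_idem (h : IsInverseSemigroup op inv) {e f : M} (he : e ⋆ e = e)
    (hf : f ⋆ f = f) : e ⋆ f = f ⋆ e := by
  have hef := h.op_idem_of_idem he hf
  have hfe := h.op_idem_of_idem hf he
  have : f ⋆ e = inv (e ⋆ f) := by
    refine h.eq_inv (e ⋆ f) _ ?_ ?_
    · calc e ⋆ f ⋆ (f ⋆ e) ⋆ (e ⋆ f) = e ⋆ (f ⋆ f) ⋆ (e ⋆ e) ⋆ f := by simp only [h.assoc]
        _ = e ⋆ f := by rw [he, hf, h.assoc (e ⋆ f), hef]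
    · calc f ⋆ e ⋆ (e ⋆ f) ⋆ (f ⋆ e) = f ⋆ (e ⋆ e) ⋆ (f ⋆ f) ⋆ e := by simp only [h.assoc]
        _ = f ⋆ e := by rw [he, hf, h.assoc (f ⋆ e), hfe]
  rw [this, h.inv_eq_self_of_idem hef]

end IsInverseSemigroup

namespace WeakBrace

local infixl:65 " +ᵂ " => WeakBrace.add
local infixl:70 " ∘ᵂ " => WeakBrace.mul

section

variable {S : Type*} [WeakBrace S]

theorem isInverseSemigroup_add : IsInverseSemigroup (add : S → S → S) neg :=
  ⟨WeakBrace.add_assoc, add_reg, neg_reg, neg_unique⟩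

theorem isInverseSemigroup_mul : IsInverseSemigroup (mul : S → S → S) inv :=
  ⟨WeakBrace.mul_assoc, mul_reg, inv_reg, inv_unique⟩

end

variable {S : Type*} [DualWeakBrace S]

theorem inv_mul_self (a : S) : inv a ∘ᵂ a = neg a +ᵂ a := by
  rw [← DualWeakBrace.clifford, link]

theorem mul_add_neg_add_self (a b : S) : a ∘ᵂ b +ᵂ (neg b +ᵂ b) = a ∘ᵂ b := by
  have hA : IsInverseSemigroup (add : S → S → S) neg := isInverseSemigroup_add
  have hM : IsInverseSemigroup (mul : S → S → S) inv := isInverseSemigroup_mul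
  set c := a ∘ᵂ b
  set g := neg b +ᵂ b
  set f := neg c +ᵂ c
  have hgM : g ∘ᵂ g = g := by
    simp only [g, ← inv_mul_self]
    exact hM.inv_op_self_idem b
  have hfM : f ∘ᵂ f = f := by
    simp only [f, ← inv_mul_self]
    exact hM.inv_op_self_idem c
  have hfgM : f ∘ᵂ g = f := by
    simp only [f, g, ← inv_mul_self]
    rw [hM.assoc, hM.op_op_inv_op_self]
  have hgfM : g ∘ᵂ f = f := (hM.op_comm_of_idem hgM hfM).trans hfgM
  have hgA : g +ᵂ g = g := hA.inv_op_self_idem b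
  have hfA : f +ᵂ f = f := hA.inv_op_self_idem c
  have hfgf : f +ᵂ g +ᵂ f = f := by
    have hd := distrib g f f
    rwa [hfA, hgfM, hA.inv_eq_self_of_idem hgA, eq_comm] at hd
  have hfg : f +ᵂ g = f := by
    rwa [hA.assoc, hA.op_comm_of_idem hgA hfA, ← hA.assoc, hfA] at hfgf
  have hcf : c +ᵂ f = c := by rw [← hA.assoc, hA.op_inv_op]
  calc c +ᵂ g = c +ᵂ f +ᵂ g := by rw [hcf]
    _ = c := by rw [hA.assoc, hfg, hcf]

theorem lam_eq_cdot_add (a b : S) : lam a b = cdot a b +ᵂ b := by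
  simp only [lam, cdot, WeakBrace.add_assoc, mul_add_neg_add_self]

end WeakBrace

open WeakBrace
theorem stmt11 {S : Type*} [DualWeakBrace S] (I : Set S) (hI : IsFullAddSub I) :
    IsLeftIdeal I ↔ ∀ a : S, ∀ x ∈ I, cdot a x ∈ I := by
  obtain ⟨hidem, hadd, hneg⟩ := hI
  constructor
  · rintro ⟨-, hlam⟩ a x hx
    exact hadd _ (hlam a x hx) _ (hneg x hx)
  · intro hcdot
    refine ⟨⟨hidem, hadd, hneg⟩, fun a x hx => ?_⟩
    rw [lam_eq_cdot_add]
    exact hadd _ (hcdot a x hx) x hx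
end

section
/- In a dual weak brace S, a normal subsemigroup I of (S,+) is an ideal of S if and only if x · a ∈ I and λ_a(x) ∈ I for all a ∈ S and x ∈ I. In particular, for any such I, a ∘ x ∘ a⁻ ∈ I for all a ∈ S, x ∈ I. -/
/-!
Both `(S,+)` and `(S,∘)` are Clifford inverse semigroups (for `+` because `a - a = -a + a`,
which follows from `a ∘ b = a + λ_a(b)` applied to `b = a⁻`), so their idempotents, which
include every `b⁰ = -b + b = b ∘ b⁻`, are central. This yields the identities
`x ∘ a = a ∘ (a⁻ ∘ x ∘ a)` and `x ∘ a = x + x · a + a`. The first gives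
`x · a = -x + (a + λ_a(a⁻ ∘ x ∘ a) - a)`, so an ideal is closed under `x ↦ x · a`.
Conversely, `x ∘ y = x + λ_x(y)`, `x⁻ = -(x · x⁻) - x` and
`a⁻ ∘ x ∘ a = (a⁻ + λ_{a⁻}(x + x · a) - a⁻) + (-a⁻ + a⁻)` express the multiplicative
closure properties of `I` through `+`, `-`, normality, `λ` and `·`.
-/

structure IsInverseSemigroup_s13 {S : Type*} (op : S → S → S) (iv : S → S) : Prop where
  assoc : ∀ a b c, op (op a b) c = op a (op b c)
  op_iv_op : ∀ a, op a (op (iv a) a) = a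
  iv_op_iv : ∀ a, op (iv a) (op a (iv a)) = iv a
  eq_iv : ∀ a x, op a (op x a) = a → op x (op a x) = x → x = iv a

namespace IsInverseSemigroup_s13

variable {S : Type*} {op : S → S → S} {iv : S → S}

local infixr:70 " ⋆ " => op

theorem iv_iv (h : IsInverseSemigroup_s13 op iv) (a : S) : iv (iv a) = a :=
  (h.eq_iv (iv a) a (h.iv_op_iv a) (h.op_iv_op a)).symm

theorem iv_eq_self_of_idem (h : IsInverseSemigroup_s13 op iv) {e : S} (he : e ⋆ e = e) :
    iv e = e :=
  (h.eq_iv e e (by rw [he, he]) (by rw [he, he])).symm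

theorem op_iv_op_right (h : IsInverseSemigroup_s13 op iv) (a t : S) :
    a ⋆ iv a ⋆ a ⋆ t = a ⋆ t := by
  rw [← h.assoc (iv a) a t, ← h.assoc, h.op_iv_op]

theorem iv_op_iv_right (h : IsInverseSemigroup_s13 op iv) (a t : S) :
    iv a ⋆ a ⋆ iv a ⋆ t = iv a ⋆ t := by
  rw [← h.assoc a (iv a) t, ← h.assoc, h.iv_op_iv]

theorem idem_op_right (h : IsInverseSemigroup_s13 op iv) {e : S} (he : e ⋆ e = e) (t : S) :
    e ⋆ e ⋆ t = e ⋆ t := by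
  rw [← h.assoc, he]

theorem op_iv_idem (h : IsInverseSemigroup_s13 op iv) (a : S) :
    (a ⋆ iv a) ⋆ a ⋆ iv a = a ⋆ iv a := by
  rw [h.assoc, h.op_iv_op_right]

theorem iv_op_idem (h : IsInverseSemigroup_s13 op iv) (a : S) :
    (iv a ⋆ a) ⋆ iv a ⋆ a = iv a ⋆ a := by
  rw [h.assoc, h.iv_op_iv_right]

theorem op_idem (h : IsInverseSemigroup_s13 op iv) {e f : S} (he : e ⋆ e = e) (hf : f ⋆ f = f) :
    (e ⋆ f) ⋆ e ⋆ f = e ⋆ f := by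
  set x := iv (e ⋆ f)
  have hx_left : e ⋆ f ⋆ x ⋆ e ⋆ f = e ⋆ f := by simpa only [h.assoc] using h.op_iv_op (e ⋆ f)
  have hx_right (t : S) : x ⋆ e ⋆ f ⋆ x ⋆ t = x ⋆ t := by
    simpa only [h.assoc] using congrArg (· ⋆ t) (h.iv_op_iv (e ⋆ f))
  -- `f ⋆ x ⋆ e` is an inverse of `e ⋆ f`, hence is `x`; and it is visibly idempotent
  have hfxe : f ⋆ x ⋆ e = x := by
    refine h.eq_iv (e ⋆ f) _ ?_ ?_
    · simp only [h.assoc, h.idem_op_right he, h.idem_op_right hf, hx_left]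
    · simp only [h.assoc, h.idem_op_right he, h.idem_op_right hf, hx_right]
  have hx : x ⋆ x = x :=
    calc x ⋆ x = (f ⋆ x ⋆ e) ⋆ f ⋆ x ⋆ e := by rw [hfxe]
      _ = f ⋆ x ⋆ e := by simp only [h.assoc, hx_right]
      _ = x := hfxe
  have hef : e ⋆ f = x := by rw [← h.iv_eq_self_of_idem hx, h.iv_iv]
  rw [hef, hx]

theorem idem_comm (h : IsInverseSemigroup_s13 op iv) {e f : S} (he : e ⋆ e = e) (hf : f ⋆ f = f) :
    e ⋆ f = f ⋆ e := by
  have hef := h.op_idem he hf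
  have hfe := h.op_idem hf he
  have hfe_iv : f ⋆ e = iv (e ⋆ f) := by
    refine h.eq_iv (e ⋆ f) _ ?_ ?_
    · simp only [h.assoc, h.idem_op_right he, h.idem_op_right hf]
      simpa only [h.assoc] using hef
    · simp only [h.assoc, h.idem_op_right he, h.idem_op_right hf]
      simpa only [h.assoc] using hfe
  rw [hfe_iv, h.iv_eq_self_of_idem hef]

theorem idem_comm_right (h : IsInverseSemigroup_s13 op iv) {e f : S} (he : e ⋆ e = e)
    (hf : f ⋆ f = f) (t : S) : e ⋆ f ⋆ t = f ⋆ e ⋆ t := by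
  rw [← h.assoc, h.idem_comm he hf, h.assoc]

theorem iv_op (h : IsInverseSemigroup_s13 op iv) (a b : S) : iv (a ⋆ b) = iv b ⋆ iv a := by
  have hcomm (t : S) := h.idem_comm_right (h.op_iv_idem b) (h.iv_op_idem a) t
  simp only [h.assoc] at hcomm
  refine (h.eq_iv (a ⋆ b) _ ?_ ?_).symm
  · simp only [h.assoc, hcomm, h.op_iv_op_right, h.op_iv_op]
  · simp only [h.assoc, ← hcomm, h.iv_op_iv_right, h.iv_op_iv]

theorem idem_comm_of_clifford (h : IsInverseSemigroup_s13 op iv) (hcl : ∀ a, a ⋆ iv a = iv a ⋆ a)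
    {e : S} (he : e ⋆ e = e) (a : S) : e ⋆ a = a ⋆ e := by
  have hcomm : e ⋆ iv a ⋆ a = iv a ⋆ a ⋆ e := by
    simpa only [h.assoc] using h.idem_comm he (h.iv_op_idem a)
  have hconj : a ⋆ e ⋆ iv a = e ⋆ iv a ⋆ a := by
    have := hcl (a ⋆ e)
    rw [h.iv_op, h.iv_eq_self_of_idem he] at this
    simpa only [h.assoc, ← hcomm, h.idem_op_right he] using this
  calc e ⋆ a = e ⋆ iv a ⋆ a ⋆ a := by rw [← h.assoc (iv a) a a, ← hcl, h.assoc, h.op_iv_op]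
    _ = (a ⋆ e ⋆ iv a) ⋆ a := by rw [hconj, h.assoc, h.assoc]
    _ = a ⋆ e := by rw [h.assoc, h.assoc, hcomm, h.op_iv_op_right]

end IsInverseSemigroup_s13

namespace WeakBrace

local infixr:65 " ⊹ " => add
local infixr:70 " ⊚ " => mul
local prefix:max "⊝" => neg
local postfix:max "⁻" => inv

theorem isInverseSemigroup_add_s13 (S : Type*) [WeakBrace S] :
    IsInverseSemigroup_s13 (add (S := S)) neg where
  assoc := add_assoc
  op_iv_op a := by rw [← add_assoc]; exact add_reg a
  iv_op_iv a := by rw [← add_assoc]; exact neg_reg a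
  eq_iv a x h₁ h₂ := neg_unique a x (by rwa [add_assoc]) (by rwa [add_assoc])

theorem isInverseSemigroup_mul_s13 (S : Type*) [WeakBrace S] :
    IsInverseSemigroup_s13 (mul (S := S)) inv where
  assoc := mul_assoc
  op_iv_op a := by rw [← mul_assoc]; exact mul_reg a
  iv_op_iv a := by rw [← mul_assoc]; exact inv_reg a
  eq_iv a x h₁ h₂ := inv_unique a x (by rwa [mul_assoc]) (by rwa [mul_assoc])

section

variable {S : Type*} [WeakBrace S]

theorem neg_neg (a : S) : ⊝⊝a = a := (isInverseSemigroup_add_s13 S).iv_iv a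

theorem inv_inv (a : S) : a⁻⁻ = a := (isInverseSemigroup_mul_s13 S).iv_iv a

theorem neg_add (a b : S) : ⊝(a ⊹ b) = ⊝b ⊹ ⊝a := (isInverseSemigroup_add_s13 S).iv_op a b

theorem neg_mul (a b : S) : ⊝(a ⊚ b) = ⊝a ⊹ a ⊚ ⊝b ⊹ ⊝a := by
  have h₁ : a ⊚ b = a ⊚ b ⊹ ⊝a ⊹ a ⊚ ⊝b ⊹ ⊝a ⊹ a ⊚ b := by
    conv_lhs => rw [← (isInverseSemigroup_add_s13 S).op_iv_op b]
    simp only [distrib, add_assoc]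
  have h₂ : a ⊚ ⊝b = a ⊚ ⊝b ⊹ ⊝a ⊹ a ⊚ b ⊹ ⊝a ⊹ a ⊚ ⊝b := by
    conv_lhs => rw [← (isInverseSemigroup_add_s13 S).iv_op_iv b]
    simp only [distrib, add_assoc]
  refine ((isInverseSemigroup_add_s13 S).eq_iv _ _ ?_ ?_).symm
  · simpa only [add_assoc] using h₁.symm
  · conv_rhs => rw [h₂]
    simp only [add_assoc]

theorem add_lam (a b : S) : a ⊹ lam a b = a ⊚ b := by
  have h : a ⊚ b = a ⊹ ⊝(a ⊚ ⊝b) ⊹ a := by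
    rw [← neg_neg (a ⊚ b), neg_mul, neg_add, neg_add, neg_neg, add_assoc]
  rw [lam, h, (isInverseSemigroup_add_s13 S).op_iv_op_right]

theorem add_neg_eq_neg_add (a : S) : a ⊹ ⊝a = ⊝a ⊹ a := by
  have h₁ : (a ⊹ ⊝a) ⊹ ⊝a ⊹ a = ⊝a ⊹ a := by
    simpa only [lam, link, add_assoc] using add_lam a a⁻
  have h₂ : (⊝a ⊹ a) ⊹ a ⊹ ⊝a = a ⊹ ⊝a := by
    simpa only [lam, link, neg_neg, add_assoc] using add_lam (⊝a) (⊝a)⁻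
  rw [← h₁, (isInverseSemigroup_add_s13 S).idem_comm ((isInverseSemigroup_add_s13 S).op_iv_idem a)
    ((isInverseSemigroup_add_s13 S).iv_op_idem a), h₂]

theorem add_comm_of_idem {e : S} (he : e ⊹ e = e) (a : S) : e ⊹ a = a ⊹ e :=
  (isInverseSemigroup_add_s13 S).idem_comm_of_clifford add_neg_eq_neg_add he a

variable {I : Set S}

theorem IsNormalAdd.idem_mem (hI : IsNormalAdd I) {e : S} (he : e ⊹ e = e) : e ∈ I :=
  hI.1.1 e he

theorem IsNormalAdd.add_mem (hI : IsNormalAdd I) {x y : S} (hx : x ∈ I) (hy : y ∈ I) :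
    x ⊹ y ∈ I :=
  hI.1.2.1 x hx y hy

theorem IsNormalAdd.neg_mem (hI : IsNormalAdd I) {x : S} (hx : x ∈ I) : ⊝x ∈ I := hI.1.2.2 x hx

theorem IsNormalAdd.add_add_neg_mem (hI : IsNormalAdd I) (a : S) {x : S} (hx : x ∈ I) :
    a ⊹ x ⊹ ⊝a ∈ I := by
  simpa only [neg_neg, add_assoc] using hI.2 (⊝a) x hx

end

section

variable {S : Type*} [DualWeakBrace S]

theorem mul_comm_of_idem {e : S} (he : e ⊚ e = e) (a : S) : e ⊚ a = a ⊚ e :=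
  (isInverseSemigroup_mul_s13 S).idem_comm_of_clifford DualWeakBrace.clifford he a

theorem inv_mul_self_s13 (a : S) : a⁻ ⊚ a = ⊝a⁻ ⊹ a⁻ := by
  simpa only [inv_inv] using link a⁻

theorem mul_add_neg_add (a b : S) : a ⊚ b ⊹ ⊝b ⊹ b = a ⊚ b := by
  have hS := isInverseSemigroup_add_s13 S
  obtain ⟨e, he⟩ : ∃ e, ⊝b ⊹ b = e := ⟨_, rfl⟩
  have he_add : e ⊹ e = e := he ▸ hS.iv_op_idem b
  have he_mul : e ⊚ e = e := he ▸ link b ▸ (isInverseSemigroup_mul_s13 S).op_iv_idem b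
  rw [he]
  have hae : a ⊚ e ⊹ e = a ⊚ e := by
    rw [← mul_comm_of_idem he_mul, ← add_comm_of_idem he_add]
    simpa only [lam, hS.iv_eq_self_of_idem he_add, hS.idem_op_right he_add] using add_lam e a
  have hu : a ⊚ b ⊹ ⊝(a ⊚ b) = a ⊚ e ⊹ ⊝a := by
    rw [← he, ← add_neg_eq_neg_add, distrib, neg_mul]
    simp only [add_assoc]
  have hue (t : S) : (a ⊚ b ⊹ ⊝(a ⊚ b)) ⊹ e ⊹ t = (a ⊚ b ⊹ ⊝(a ⊚ b)) ⊹ t := by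
    rw [hu, add_assoc, add_assoc, ← add_assoc (⊝a) e t, ← add_comm_of_idem he_add, add_assoc,
      ← add_assoc (a ⊚ e), hae]
  calc a ⊚ b ⊹ e = a ⊚ b ⊹ ⊝(a ⊚ b) ⊹ a ⊚ b ⊹ e := by rw [hS.op_iv_op_right]
    _ = a ⊚ b ⊹ ⊝(a ⊚ b) ⊹ a ⊚ b := by
      rw [← add_comm_of_idem he_add (a ⊚ b), ← add_assoc (a ⊚ b), hue, add_assoc]
    _ = a ⊚ b := hS.op_iv_op (a ⊚ b)

theorem cdot_add (x a : S) : cdot x a ⊹ a = lam x a := by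
  rw [cdot, lam, add_assoc, add_assoc, mul_add_neg_add]

theorem mul_eq_add_cdot_add (x a : S) : x ⊚ a = x ⊹ cdot x a ⊹ a := by
  rw [cdot_add, add_lam]

theorem mul_eq_mul_inv_mul_mul (x a : S) : x ⊚ a = a ⊚ a⁻ ⊚ x ⊚ a := by
  rw [← mul_assoc, ← mul_assoc, mul_comm_of_idem ((isInverseSemigroup_mul_s13 S).op_iv_idem a),
    mul_assoc, mul_assoc, (isInverseSemigroup_mul_s13 S).op_iv_op]

theorem cdot_inv (x : S) : cdot x x⁻ = ⊝x ⊹ ⊝x⁻ := by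
  rw [cdot, link, ← add_neg_eq_neg_add, (isInverseSemigroup_add_s13 S).iv_op_iv]

theorem inv_add_add_neg (x : S) : x⁻ ⊹ x ⊹ ⊝x = x⁻ := by
  rw [add_neg_eq_neg_add, ← link, DualWeakBrace.clifford, inv_mul_self_s13,
    (isInverseSemigroup_add_s13 S).op_iv_op]

variable {I : Set S}

theorem IsIdeal.cdot_mem (h : IsIdeal I) (a : S) {x : S} (hx : x ∈ I) : cdot x a ∈ I := by
  obtain ⟨hI, hlam, -, -, -, hconj⟩ := h
  have hcdot : cdot x a = ⊝x ⊹ a ⊹ lam a (a⁻ ⊚ x ⊚ a) ⊹ ⊝a := by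
    rw [← add_assoc a, add_lam, ← mul_eq_mul_inv_mul_mul, cdot, add_assoc]
  rw [hcdot]
  refine hI.add_mem (hI.neg_mem hx) (hI.add_add_neg_mem a (hlam a _ ?_))
  simpa only [mul_assoc] using hconj a x hx

theorem IsIdeal.mul_mul_inv_mem (h : IsIdeal I) (a : S) {x : S} (hx : x ∈ I) :
    (a ⊚ x) ⊚ a⁻ ∈ I := by
  simpa only [inv_inv] using h.2.2.2.2.2 a⁻ x hx

theorem isNormalMul_of_cdot_mem_of_lam_mem (hI : IsNormalAdd I)
    (H : ∀ a : S, ∀ x ∈ I, cdot x a ∈ I ∧ lam a x ∈ I) : IsNormalMul I := by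
  refine ⟨hI.1.1, fun x hx y hy => ?_, fun x hx => ?_, fun a x hx => ?_⟩
  · rw [← add_lam]
    exact hI.add_mem hx (H x y hy).2
  · have hinv : x⁻ = ⊝(cdot x x⁻) ⊹ ⊝x := by
      rw [cdot_inv, neg_add, neg_neg, neg_neg, add_assoc, inv_add_add_neg]
    rw [hinv]
    exact hI.add_mem (hI.neg_mem (H x⁻ x hx).1) (hI.neg_mem hx)
  · have hconj : (a⁻ ⊚ x) ⊚ a = (a⁻ ⊹ lam a⁻ (x ⊹ cdot x a) ⊹ ⊝a⁻) ⊹ ⊝a⁻ ⊹ a⁻ := by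
      rw [mul_assoc, mul_eq_add_cdot_add x a, ← add_assoc x, distrib, inv_mul_self_s13,
        ← add_lam]
      simp only [add_assoc]
    rw [hconj]
    exact hI.add_mem (hI.add_add_neg_mem a⁻ (H a⁻ _ (hI.add_mem hx (H a x hx).1)).2)
      (hI.idem_mem ((isInverseSemigroup_add_s13 S).iv_op_idem a⁻))

end

end WeakBrace

open WeakBrace
theorem stmt13 {S : Type*} [DualWeakBrace S] (I : Set S) (hI : IsNormalAdd I) :
    (IsIdeal I ↔ ∀ a : S, ∀ x ∈ I, cdot x a ∈ I ∧ lam a x ∈ I) ∧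
    (IsIdeal I → ∀ a : S, ∀ x ∈ I, mul (mul a x) (inv a) ∈ I) :=
  ⟨⟨fun h a x hx => ⟨h.cdot_mem a hx, h.2.1 a x hx⟩,
      fun H => ⟨hI, fun a x hx => (H a x hx).2, isNormalMul_of_cdot_mem_of_lam_mem hI H⟩⟩,
    fun h a _ hx => h.mul_mul_inv_mem a hx⟩
end
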